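/- arXiv:math/0210075 — 2 statements merged into one kernel-verified Lean document; each statement's English description precedes it below -/
import Mathlib

section
/- Let F be a field, e ≥ 3, R = F[[s^e, s^{e+1}]] with conductor s^c R̄ where c = (e−1)e and R̄ = F[[s]]. Let g' = s^c + s^{c+1}t + ⋯ + s^{c+e-1}t^{e-1} ∈ R[t]. Then μ_R(g') = e = μ_R(c(g')); in particular, for f = s^c − s^{c+1}t, the smallest k with c(fg')·c(f)^{k-1} = c(f)^k·c(g') is k = e. -/
open Polynomial
set_option synthInstance.maxHeartbeats 1000000

/-- The content ideal of a polynomial: the ideal generated by its coefficients. -/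
noncomputable def cont {R : Type*} [CommRing R] (p : R[X]) : Ideal R :=
  Ideal.span (Set.range p.coeff)

/-- The minimal number of generators of an ideal. -/
noncomputable def mug {R : Type*} [CommRing R] (I : Ideal R) : ℕ :=
  sInf {n | ∃ x : Fin n → R, Ideal.span (Set.range x) = I}

/-- The Dedekind--Mertens number of a polynomial. -/
noncomputable def dmNumber (R : Type*) [CommRing R] (g : R[X]) : ℕ :=
  sInf {k | 0 < k ∧ ∀ f : R[X], cont (f * g) * cont f ^ (k - 1) = cont f ^ k * cont g}

/-- The polarized Dedekind--Mertens number of a polynomial. -/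
noncomputable def polDmNumber (R : Type*) [CommRing R] (g : R[X]) : ℕ :=
  sInf {k | 0 < k ∧ ∀ f : Fin k → R[X],
    (∑ i, cont (f i * g) * ∏ j ∈ Finset.univ.erase i, cont (f j)) =
      (∏ i, cont (f i)) * cont g}

/-- `x` is in the integral closure of the ideal `I`. -/
def memIntCl {R : Type*} [CommRing R] (I : Ideal R) (x : R) : Prop :=
  ∃ k : ℕ, 0 < k ∧ ∃ a : ℕ → R, (∀ i, 1 ≤ i → i ≤ k → a i ∈ I ^ i) ∧
    x ^ k + ∑ i ∈ Finset.Icc 1 k, a i * x ^ (k - i) = 0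


/-!
The upper bounds come from the Dedekind–Mertens lemma
`c(f)^(n+1) c(g) = c(f)^n c(fg)` for `deg g ≤ n`, proved by induction on `deg f` after splitting
off the constant terms of `f` and `g`. For the lower bounds everything is read off supports:
the elements of `R` are supported on `{0} ∪ [e, ∞)`, and `f g' = s^(2c) (1 - (s t)^e)`, so
`c(f g') c(f)^(e-2)` only contains series supported on `e c + ([0, e-2] ∪ [e, ∞))`, whereas
`c(f)^(e-1) c(g')` contains `s^(c(e-2)) s^(c+1) s^(c+e-2) = s^(e c + e - 1)`. Finally, on `c(g')`
the map `y ↦ (coefficients of s^c, …, s^(c+e-1) in y)` is semilinear over the residue field `F`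
and its image spans `F^e`, so `c(g')` needs `e` generators.
-/

section Content
variable {A : Type*} [CommRing A]

lemma coeff_mem_cont (p : A[X]) (n : ℕ) : p.coeff n ∈ cont p :=
  Ideal.subset_span ⟨n, rfl⟩

lemma cont_le_iff {p : A[X]} {I : Ideal A} : cont p ≤ I ↔ ∀ n, p.coeff n ∈ I := by
  simp [cont, Ideal.span_le, Set.range_subset_iff]

@[simp]
lemma cont_zero : cont (0 : A[X]) = ⊥ := by
  simp [cont_le_iff, ← le_bot_iff]

lemma cont_mul_le (p q : A[X]) : cont (p * q) ≤ cont p * cont q :=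
  cont_le_iff.2 fun n => by
    rw [coeff_mul]
    exact Ideal.sum_mem _ fun x _ => Ideal.mul_mem_mul (coeff_mem_cont p x.1) (coeff_mem_cont q x.2)

lemma cont_sub_le (p q : A[X]) : cont (p - q) ≤ cont p ⊔ cont q :=
  cont_le_iff.2 fun n => by
    rw [coeff_sub]
    exact sub_mem (Ideal.mem_sup_left (coeff_mem_cont p n))
      (Ideal.mem_sup_right (coeff_mem_cont q n))

lemma cont_C_mul_le (a : A) (p : A[X]) : cont (C a * p) ≤ Ideal.span {a} * cont p :=
  cont_le_iff.2 fun n => by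
    rw [coeff_C_mul]
    exact Ideal.mul_mem_mul (Ideal.mem_span_singleton_self a) (coeff_mem_cont p n)

lemma cont_X_mul (p : A[X]) : cont (X * p) = cont p := by
  refine le_antisymm (cont_le_iff.2 fun n => ?_) (cont_le_iff.2 fun n => ?_)
  · rcases n with _ | n
    · simp
    · rw [coeff_X_mul]; exact coeff_mem_cont p n
  · rw [← coeff_X_mul]; exact coeff_mem_cont _ _

lemma cont_divX_le (p : A[X]) : cont p.divX ≤ cont p :=
  cont_le_iff.2 fun n => by rw [coeff_divX]; exact coeff_mem_cont p _

lemma cont_le_span_coeff_zero_sup_cont_divX (p : A[X]) :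
    cont p ≤ Ideal.span {p.coeff 0} ⊔ cont p.divX :=
  cont_le_iff.2 fun n => by
    rcases n with _ | n
    · exact Ideal.mem_sup_left (Ideal.mem_span_singleton_self _)
    · rw [← coeff_divX]; exact Ideal.mem_sup_right (coeff_mem_cont _ n)

lemma cont_divX_mul_le (p q : A[X]) :
    cont (p.divX * q) ≤ cont (p * q) ⊔ Ideal.span {p.coeff 0} * cont q := by
  have h : X * (p.divX * q) = p * q - C (p.coeff 0) * q := by
    linear_combination q * X_mul_divX_add p
  rw [← cont_X_mul, h]
  exact (cont_sub_le _ _).trans (sup_le_sup_left (cont_C_mul_le _ _) _)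

lemma span_coeff_zero_mul_le_cont (p q : A[X]) :
    Ideal.span {p.coeff 0} * Ideal.span {q.coeff 0} ≤ cont (p * q) := by
  rw [Ideal.span_singleton_mul_span_singleton, Ideal.span_le, Set.singleton_subset_iff,
    ← mul_coeff_zero]
  exact coeff_mem_cont _ 0

lemma coeff_sum_range_C_mul_X_pow (x : ℕ → A) (n k : ℕ) :
    (∑ i ∈ Finset.range n, C (x i) * X ^ i).coeff k = if k < n then x k else 0 := by
  simp

lemma cont_sum_range_C_mul_X_pow (x : ℕ → A) (n : ℕ) :
    cont (∑ i ∈ Finset.range n, C (x i) * X ^ i) = Ideal.span (Set.range fun i : Fin n => x i) := by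
  refine le_antisymm (cont_le_iff.2 fun k => ?_) (Ideal.span_le.2 ?_)
  · rw [coeff_sum_range_C_mul_X_pow]
    split_ifs with hk
    · exact Ideal.subset_span ⟨⟨k, hk⟩, rfl⟩
    · exact zero_mem _
  · rintro _ ⟨i, rfl⟩
    have := coeff_mem_cont (∑ i ∈ Finset.range n, C (x i) * X ^ i) i
    rwa [coeff_sum_range_C_mul_X_pow, if_pos i.2] at this

lemma natDegree_sum_range_C_mul_X_pow_le (x : ℕ → A) (n : ℕ) :
    (∑ i ∈ Finset.range n, C (x i) * X ^ i).natDegree ≤ n - 1 :=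
  natDegree_sum_le_of_forall_le _ _ fun i hi =>
    (natDegree_C_mul_X_pow_le _ _).trans (by rw [Finset.mem_range] at hi; omega)

end Content

lemma Ideal.pow_succ_le_mul_pow_sup_pow {A : Type*} [CommRing A] {I J K : Ideal A}
    (hI : I ≤ J ⊔ K) (hK : K ≤ I) (n : ℕ) : I ^ (n + 1) ≤ J * I ^ n ⊔ K ^ (n + 1) := by
  induction n with
  | zero => simpa using hI
  | succ n ih =>
    calc I ^ (n + 2) = I * I ^ (n + 1) := pow_succ' _ _
      _ ≤ I * (J * I ^ n ⊔ K ^ (n + 1)) := Ideal.mul_mono_right ih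
      _ ≤ J * I ^ (n + 1) ⊔ (J ⊔ K) * K ^ (n + 1) := by
        rw [mul_sup, mul_left_comm, ← pow_succ']
        exact sup_le_sup_left (Ideal.mul_mono_left hI) _
      _ ≤ J * I ^ (n + 1) ⊔ K ^ (n + 2) := by
        rw [sup_mul, ← sup_assoc, ← pow_succ']
        exact sup_le_sup_right (sup_le le_rfl (Ideal.mul_mono_right (Ideal.pow_right_mono hK _))) _

section DedekindMertens
variable {A : Type*} [CommRing A]

lemma cont_pow_succ_mul_le_of_span_coeff_zero_mul_le {f g : A[X]} {n : ℕ}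
    (hdivX : cont f.divX ^ (n + 1) * cont g ≤ cont f.divX ^ n * cont (f.divX * g))
    (hcoeff : Ideal.span {f.coeff 0} * cont f ^ n * cont g ≤ cont f ^ n * cont (f * g)) :
    cont f ^ (n + 1) * cont g ≤ cont f ^ n * cont (f * g) := by
  set I := cont f
  set a := Ideal.span {f.coeff 0}
  set J := cont f.divX
  have hJ : J ^ n ≤ I ^ n := Ideal.pow_right_mono (cont_divX_le f) n
  have hJg : J ^ (n + 1) * cont g ≤ I ^ n * cont (f * g) ⊔ a * I ^ n * cont g :=
    calc J ^ (n + 1) * cont g ≤ J ^ n * (cont (f * g) ⊔ a * cont g) :=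
          hdivX.trans (Ideal.mul_mono_right (cont_divX_mul_le f g))
      _ ≤ I ^ n * (cont (f * g) ⊔ a * cont g) := Ideal.mul_mono_left hJ
      _ = I ^ n * cont (f * g) ⊔ a * I ^ n * cont g := by
          rw [Ideal.mul_sup, mul_left_comm, mul_assoc]
  calc I ^ (n + 1) * cont g ≤ (a * I ^ n ⊔ J ^ (n + 1)) * cont g :=
        Ideal.mul_mono_left (Ideal.pow_succ_le_mul_pow_sup_pow
          (cont_le_span_coeff_zero_sup_cont_divX f) (cont_divX_le f) n)
    _ = a * I ^ n * cont g ⊔ J ^ (n + 1) * cont g := Ideal.sup_mul _ _ _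
    _ ≤ I ^ n * cont (f * g) := sup_le hcoeff (hJg.trans (sup_le le_rfl hcoeff))

lemma span_coeff_zero_mul_pow_mul_cont_le {f g : A[X]} {n : ℕ}
    (hdivX : Ideal.span {f.coeff 0} * cont f ^ n * cont g.divX ≤ cont f ^ n * cont (f * g)) :
    Ideal.span {f.coeff 0} * cont f ^ n * cont g ≤ cont f ^ n * cont (f * g) :=
  calc Ideal.span {f.coeff 0} * cont f ^ n * cont g
      ≤ Ideal.span {f.coeff 0} * cont f ^ n * (Ideal.span {g.coeff 0} ⊔ cont g.divX) :=
        Ideal.mul_mono_right (cont_le_span_coeff_zero_sup_cont_divX g)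
    _ = Ideal.span {f.coeff 0} * Ideal.span {g.coeff 0} * cont f ^ n ⊔
          Ideal.span {f.coeff 0} * cont f ^ n * cont g.divX := by
        rw [Ideal.mul_sup, mul_right_comm]
    _ ≤ cont f ^ n * cont (f * g) :=
        sup_le ((Ideal.mul_mono_left (span_coeff_zero_mul_le_cont f g)).trans_eq (mul_comm _ _))
          hdivX

lemma span_coeff_zero_mul_pow_succ_mul_cont_divX_le {f g : A[X]} {n : ℕ}
    (h : cont f ^ (n + 1) * cont g.divX ≤ cont f ^ n * cont (f * g.divX)) :
    Ideal.span {f.coeff 0} * cont f ^ (n + 1) * cont g.divX ≤ cont f ^ (n + 1) * cont (f * g) := by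
  set I := cont f
  set a := Ideal.span {f.coeff 0}
  have ha : a ≤ I := (Ideal.span_singleton_le_iff_mem _).2 (coeff_mem_cont f 0)
  have hfg : cont (f * g.divX) ≤ cont (f * g) ⊔ Ideal.span {g.coeff 0} * I := by
    simpa only [mul_comm f] using cont_divX_mul_le g f
  calc a * I ^ (n + 1) * cont g.divX
      ≤ a * (I ^ n * (cont (f * g) ⊔ Ideal.span {g.coeff 0} * I)) := by
        rw [mul_assoc]; exact Ideal.mul_mono_right (h.trans (Ideal.mul_mono_right hfg))
    _ = a * I ^ n * cont (f * g) ⊔ a * Ideal.span {g.coeff 0} * I ^ (n + 1) := by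
        rw [Ideal.mul_sup, Ideal.mul_sup]; congr 1 <;> ring
    _ ≤ I ^ (n + 1) * cont (f * g) := by
        refine sup_le ?_ ?_
        · rw [pow_succ']; exact Ideal.mul_mono_left (Ideal.mul_mono_left ha)
        · rw [mul_comm _ (I ^ (n + 1))]
          exact Ideal.mul_mono_right (span_coeff_zero_mul_le_cont f g)

theorem cont_pow_succ_mul_le_of_divX {f : A[X]}
    (hdivX : ∀ n (g : A[X]), g.natDegree ≤ n →
      cont f.divX ^ (n + 1) * cont g ≤ cont f.divX ^ n * cont (f.divX * g))
    (n : ℕ) (g : A[X]) (hg : g.natDegree ≤ n) :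
    cont f ^ (n + 1) * cont g ≤ cont f ^ n * cont (f * g) := by
  induction n generalizing g with
  | zero =>
    refine cont_pow_succ_mul_le_of_span_coeff_zero_mul_le (hdivX 0 g hg)
      (span_coeff_zero_mul_pow_mul_cont_le ?_)
    rw [divX_eq_zero_iff.2 (eq_C_of_natDegree_le_zero hg)]
    simp
  | succ n ih =>
    have hgdivX : g.divX.natDegree ≤ n := by
      rw [natDegree_divX_eq_natDegree_tsub_one]; omega
    exact cont_pow_succ_mul_le_of_span_coeff_zero_mul_le (hdivX (n + 1) g hg)
      (span_coeff_zero_mul_pow_mul_cont_le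
        (span_coeff_zero_mul_pow_succ_mul_cont_divX_le (ih g.divX hgdivX)))

theorem cont_pow_succ_mul_le (f g : A[X]) {n : ℕ} (hg : g.natDegree ≤ n) :
    cont f ^ (n + 1) * cont g ≤ cont f ^ n * cont (f * g) := by
  induction h : f.natDegree generalizing f n g with
  | zero =>
    refine cont_pow_succ_mul_le_of_divX (fun n g _ => ?_) n g hg
    simp [divX_eq_zero_iff.2 (eq_C_of_natDegree_eq_zero h)]
  | succ m ih =>
    have hdivX : f.divX.natDegree = m := by
      rw [natDegree_divX_eq_natDegree_tsub_one, h, Nat.add_sub_cancel]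
    exact cont_pow_succ_mul_le_of_divX (fun n g hg => ih f.divX g hg hdivX) n g hg

theorem dedekind_mertens (f g : A[X]) {n : ℕ} (hg : g.natDegree ≤ n) :
    cont (f * g) * cont f ^ n = cont f ^ (n + 1) * cont g := by
  refine le_antisymm ?_ ((cont_pow_succ_mul_le f g hg).trans_eq (mul_comm _ _))
  calc cont (f * g) * cont f ^ n ≤ cont f * cont g * cont f ^ n :=
        Ideal.mul_mono_left (cont_mul_le f g)
    _ = cont f ^ (n + 1) * cont g := by ring

end DedekindMertens

section DedekindMertensNumber
variable {A : Type*} [CommRing A]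

lemma cont_mul_mul_cont_pow_pred_eq_of_le {f g : A[X]} {k l : ℕ} (hk : 0 < k) (hkl : k ≤ l)
    (h : cont (f * g) * cont f ^ (k - 1) = cont f ^ k * cont g) :
    cont (f * g) * cont f ^ (l - 1) = cont f ^ l * cont g := by
  obtain ⟨j, rfl⟩ := Nat.exists_eq_add_of_le hkl
  rw [show k + j - 1 = k - 1 + j by omega, pow_add, pow_add, ← mul_assoc, h]
  ring

lemma sInf_cont_mul_mul_cont_pow_pred_eq {f g : A[X]} {k : ℕ} (hk : 0 < k)
    (h : cont (f * g) * cont f ^ (k - 1) = cont f ^ k * cont g)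
    (h' : cont (f * g) * cont f ^ (k - 1 - 1) ≠ cont f ^ (k - 1) * cont g) :
    sInf {l | 0 < l ∧ cont (f * g) * cont f ^ (l - 1) = cont f ^ l * cont g} = k := by
  obtain ⟨n, rfl⟩ := Nat.exists_eq_add_of_lt hk
  refine (Nat.sInf_upward_closed_eq_succ_iff ?_ _).2 ⟨⟨hk, h⟩, fun hn => h' hn.2⟩
  exact fun k₁ k₂ hle ⟨hk₁, h₁⟩ =>
    ⟨hk₁.trans_le hle, cont_mul_mul_cont_pow_pred_eq_of_le hk₁ hle h₁⟩

lemma dmNumber_eq {g : A[X]} {k : ℕ} (hk : 0 < k)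
    (h : ∀ f : A[X], cont (f * g) * cont f ^ (k - 1) = cont f ^ k * cont g)
    (h' : ∃ f : A[X], cont (f * g) * cont f ^ (k - 1 - 1) ≠ cont f ^ (k - 1) * cont g) :
    dmNumber A g = k := by
  obtain ⟨n, rfl⟩ := Nat.exists_eq_add_of_lt hk
  obtain ⟨f, hf⟩ := h'
  refine (Nat.sInf_upward_closed_eq_succ_iff ?_ _).2 ⟨⟨hk, h⟩, fun hn => hf (hn.2 f)⟩
  exact fun k₁ k₂ hle ⟨hk₁, h₁⟩ =>
    ⟨hk₁.trans_le hle, fun f => cont_mul_mul_cont_pow_pred_eq_of_le hk₁ hle (h₁ f)⟩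

end DedekindMertensNumber

section MinimalGenerators
variable {A K V : Type*} [CommRing A] [Field K] [AddCommGroup V] [Module K V]

lemma finrank_le_of_span_range_eq (χ : A →+* K) (φ : A →+ V) {I : Ideal A}
    (hφ : ∀ r, ∀ y ∈ I, φ (r * y) = χ r • φ y) (hspan : Submodule.span K (φ '' I) = ⊤)
    {n : ℕ} (x : Fin n → A) (hx : Ideal.span (Set.range x) = I) : Module.finrank K V ≤ n := by
  have himage : Submodule.span K (φ '' I) ≤ Submodule.span K (Set.range (φ ∘ x)) := by
    rw [Submodule.span_le]
    rintro _ ⟨y, hy, rfl⟩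
    rw [← hx] at hy
    obtain ⟨r, rfl⟩ := (Submodule.mem_span_range_iff_exists_fun A).1 hy
    rw [map_sum]
    refine Submodule.sum_mem _ fun j _ => ?_
    rw [smul_eq_mul, hφ _ _ (hx ▸ Ideal.subset_span ⟨j, rfl⟩)]
    exact Submodule.smul_mem _ _ (Submodule.subset_span ⟨j, rfl⟩)
  have htop : Submodule.span K (Set.range (φ ∘ x)) = ⊤ := eq_top_iff.2 (hspan ▸ himage)
  have := finrank_range_le_card (R := K) (φ ∘ x)
  rwa [Set.finrank, htop, finrank_top, Fintype.card_fin] at this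

lemma mug_eq_of_finrank_eq (χ : A →+* K) (φ : A →+ V) {I : Ideal A}
    (hφ : ∀ r, ∀ y ∈ I, φ (r * y) = χ r • φ y) (hspan : Submodule.span K (φ '' I) = ⊤)
    {n : ℕ} (hn : Module.finrank K V = n) (x : Fin n → A) (hx : Ideal.span (Set.range x) = I) :
    mug I = n :=
  le_antisymm (Nat.sInf_le ⟨x, hx⟩) <| le_csInf ⟨n, x, hx⟩ fun _ ⟨y, hy⟩ =>
    hn ▸ finrank_le_of_span_range_eq χ φ hφ hspan y hy

end MinimalGenerators

section Support
variable {F : Type*} [CommRing F]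

def SupportedIn (S : Set ℕ) (x : PowerSeries F) : Prop :=
  ∀ n ∉ S, PowerSeries.coeff n x = 0

namespace SupportedIn
variable {S T U : Set ℕ} {x y : PowerSeries F}

lemma zero : SupportedIn S (0 : PowerSeries F) := fun _ _ => map_zero _

lemma add (hx : SupportedIn S x) (hy : SupportedIn S y) : SupportedIn S (x + y) :=
  fun n hn => by rw [map_add, hx n hn, hy n hn, add_zero]

lemma neg (hx : SupportedIn S x) : SupportedIn S (-x) :=
  fun n hn => by rw [map_neg, hx n hn, neg_zero]

lemma sub (hx : SupportedIn S x) (hy : SupportedIn S y) : SupportedIn S (x - y) :=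
  sub_eq_add_neg x y ▸ hx.add hy.neg

lemma mono (hx : SupportedIn S x) (hST : S ⊆ T) : SupportedIn T x :=
  fun n hn => hx n fun h => hn (hST h)

lemma mul (hx : SupportedIn S x) (hy : SupportedIn T y) (hU : ∀ m ∈ S, ∀ n ∈ T, m + n ∈ U) :
    SupportedIn U (x * y) := by
  intro n hn
  rw [PowerSeries.coeff_mul]
  refine Finset.sum_eq_zero fun p hp => ?_
  rw [Finset.HasAntidiagonal.mem_antidiagonal] at hp
  by_cases hp1 : p.1 ∈ S
  · by_cases hp2 : p.2 ∈ T
    · exact absurd (hp ▸ hU _ hp1 _ hp2) hn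
    · rw [hy _ hp2, mul_zero]
  · rw [hx _ hp1, zero_mul]

end SupportedIn

lemma supportedIn_X_pow {S : Set ℕ} {k : ℕ} (hk : k ∈ S) :
    SupportedIn S (PowerSeries.X ^ k : PowerSeries F) := fun n hn => by
  rw [PowerSeries.coeff_X_pow, if_neg (ne_of_mem_of_not_mem hk hn).symm]

end Support

/-- `k + ([0, t] ∪ [e, ∞))`. Every element of `F[[s^e, s^(e+1)]]` is supported on `gapSet e 0 0`. -/
def gapSet (e k t : ℕ) : Set ℕ := {n | k ≤ n ∧ (n ≤ k + t ∨ k + e ≤ n)}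

lemma add_mem_gapSet {e k t k' t' m n : ℕ} (hm : m ∈ gapSet e k t) (hn : n ∈ gapSet e k' t') :
    m + n ∈ gapSet e (k + k') (t + t') := by
  obtain ⟨hm1, hm2⟩ := hm
  obtain ⟨hn1, hn2⟩ := hn
  exact ⟨by omega, by omega⟩

section GapIdeal
variable {F : Type*} [CommRing F] {e : ℕ} {R : Subring (PowerSeries F)}
  (hR : ∀ r ∈ R, SupportedIn (gapSet e 0 0) r)

def gapIdeal (k t : ℕ) : Ideal R where
  carrier := {x | SupportedIn (gapSet e k t) (x : PowerSeries F)}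
  zero_mem' := SupportedIn.zero
  add_mem' hx hy := hx.add hy
  smul_mem' r _ hx := by
    simpa using (hR r r.2).mul hx fun _ hm _ hn => add_mem_gapSet hm hn

lemma mem_gapIdeal {k t : ℕ} {x : R} :
    x ∈ gapIdeal hR k t ↔ SupportedIn (gapSet e k t) (x : PowerSeries F) :=
  Iff.rfl

lemma gapIdeal_mul_le (k t k' t' : ℕ) :
    gapIdeal hR k t * gapIdeal hR k' t' ≤ gapIdeal hR (k + k') (t + t') :=
  Ideal.mul_le.2 fun _ hx _ hy => (mem_gapIdeal hR).2 <| by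
    simpa using ((mem_gapIdeal hR).1 hx).mul ((mem_gapIdeal hR).1 hy)
      fun _ hm _ hn => add_mem_gapSet hm hn

lemma gapIdeal_pow_le (k t j : ℕ) : gapIdeal hR k t ^ j ≤ gapIdeal hR (j * k) (j * t) := by
  induction j with
  | zero =>
    rw [pow_zero, Ideal.one_eq_top, zero_mul, zero_mul]
    exact fun r _ => hR r r.2
  | succ j ih =>
    rw [pow_succ, add_mul, add_mul, one_mul, one_mul]
    exact (Ideal.mul_mono_left ih).trans (gapIdeal_mul_le hR _ _ _ _)

end GapIdeal

lemma coeff_add_mul_eq_constantCoeff_mul {F : Type*} [CommRing F] {x y : PowerSeries F}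
    {e c i : ℕ} (hx : SupportedIn (gapSet e 0 0) x) (hy : SupportedIn (Set.Ici c) y)
    (hi : i < e) :
    PowerSeries.coeff (c + i) (x * y) =
      PowerSeries.constantCoeff x * PowerSeries.coeff (c + i) y := by
  rw [PowerSeries.coeff_mul, ← PowerSeries.coeff_zero_eq_constantCoeff_apply]
  refine Finset.sum_eq_single (0, c + i) (fun ⟨u, w⟩ huw hne => ?_) (by simp)
  rw [Finset.HasAntidiagonal.mem_antidiagonal] at huw
  rw [ne_eq, Prod.mk.injEq] at hne
  by_cases hu : u ∈ gapSet e 0 0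
  · obtain ⟨-, hu⟩ := hu
    rw [hy w (Set.notMem_Ici.2 (by omega)), mul_zero]
  · rw [hx u hu, zero_mul]

lemma supportedIn_gapSet_of_numericalSemigroup {F : Type*} [CommRing F] {e : ℕ}
    {f : PowerSeries F}
    (hf : ∀ n : ℕ, (∀ a b : ℕ, n ≠ a * e + b * (e + 1)) → PowerSeries.coeff n f = 0) :
    SupportedIn (gapSet e 0 0) f := by
  refine fun n hn => hf n fun a b h => hn ⟨Nat.zero_le n, ?_⟩
  rcases Nat.eq_zero_or_pos a with rfl | ha
  · rcases Nat.eq_zero_or_pos b with rfl | hb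
    · omega
    · right; nlinarith
  · right; nlinarith

section Example
variable {F : Type*} [Field F] {e : ℕ} {R : Subring (PowerSeries F)} {c : ℕ} {a : ℕ → R}

lemma map_mul_sum_range_C_mul_X_pow
    (ha : ∀ k, c ≤ k → (a k : PowerSeries F) = PowerSeries.X ^ k) :
    ((C (a c) - C (a (c + 1)) * X) * ∑ i ∈ Finset.range e, C (a (c + i)) * X ^ i).map R.subtype =
      C (PowerSeries.X ^ (2 * c)) - C (PowerSeries.X ^ (2 * c + e)) * X ^ e := by
  have hf : (C (a c) - C (a (c + 1)) * X).map R.subtype =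
      C (PowerSeries.X ^ c) * (1 - C PowerSeries.X * X) := by
    simp only [Polynomial.map_sub, Polynomial.map_mul, map_C, map_X, Subring.subtype_apply,
      ha c le_rfl, ha (c + 1) (by omega), pow_succ, map_mul]
    ring
  have hg : (∑ i ∈ Finset.range e, C (a (c + i)) * X ^ i).map R.subtype =
      C (PowerSeries.X ^ c) * ∑ i ∈ Finset.range e, (C PowerSeries.X * X) ^ i := by
    rw [Polynomial.map_sum, Finset.mul_sum]
    refine Finset.sum_congr rfl fun i _ => ?_
    simp only [Polynomial.map_mul, Polynomial.map_pow, map_C, map_X, Subring.subtype_apply,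
      ha (c + i) (by omega), pow_add, map_mul, map_pow, mul_pow]
    ring
  rw [Polynomial.map_mul, hf, hg, mul_mul_mul_comm, mul_neg_geom_sum]
  simp only [map_pow, map_mul, mul_pow, pow_add]
  ring

lemma cont_C_sub_C_mul_X_le_gapIdeal (hR : ∀ r ∈ R, SupportedIn (gapSet e 0 0) r)
    (ha : ∀ k, c ≤ k → (a k : PowerSeries F) = PowerSeries.X ^ k) :
    cont (C (a c) - C (a (c + 1)) * X) ≤ gapIdeal hR c 1 := by
  refine cont_le_iff.2 fun n => (mem_gapIdeal hR).2 ?_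
  rcases n with _ | _ | n
  · simpa [ha c le_rfl] using supportedIn_X_pow (F := F) (S := gapSet e c 1) ⟨le_rfl, by omega⟩
  · simpa [ha (c + 1) (by omega)] using
      (supportedIn_X_pow (F := F) (S := gapSet e c 1) (k := c + 1) ⟨by omega, by omega⟩).neg
  · simpa [coeff_X, coeff_C] using SupportedIn.zero

lemma cont_mul_sum_range_C_mul_X_pow_le_gapIdeal (hR : ∀ r ∈ R, SupportedIn (gapSet e 0 0) r)
    (ha : ∀ k, c ≤ k → (a k : PowerSeries F) = PowerSeries.X ^ k) :
    cont ((C (a c) - C (a (c + 1)) * X) * ∑ i ∈ Finset.range e, C (a (c + i)) * X ^ i) ≤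
      gapIdeal hR (2 * c) 0 := by
  refine cont_le_iff.2 fun n => (mem_gapIdeal hR).2 ?_
  rw [← Subring.coe_subtype, ← coeff_map, map_mul_sum_range_C_mul_X_pow ha, coeff_sub, coeff_C,
    coeff_C_mul_X_pow]
  refine SupportedIn.sub ?_ ?_
  · split_ifs
    · exact supportedIn_X_pow ⟨le_rfl, by omega⟩
    · exact SupportedIn.zero
  · split_ifs
    · exact supportedIn_X_pow ⟨by omega, by omega⟩
    · exact SupportedIn.zero

lemma cont_mul_mul_cont_pow_ne (hR : ∀ r ∈ R, SupportedIn (gapSet e 0 0) r) (he : 2 ≤ e)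
    (ha : ∀ k, c ≤ k → (a k : PowerSeries F) = PowerSeries.X ^ k)
    {f g : R[X]} (hf : f = C (a c) - C (a (c + 1)) * X)
    (hg : g = ∑ i ∈ Finset.range e, C (a (c + i)) * X ^ i) :
    cont (f * g) * cont f ^ (e - 1 - 1) ≠ cont f ^ (e - 1) * cont g := by
  intro heq
  obtain ⟨d, rfl⟩ := Nat.exists_eq_add_of_le' he
  simp only [Nat.add_sub_cancel, show d + 2 - 1 = d + 1 by omega] at heq
  have hc : a c ∈ cont f := by
    convert coeff_mem_cont f 0
    simp [hf]
  have hc1 : a (c + 1) ∈ cont f := by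
    convert neg_mem (coeff_mem_cont f 1)
    simp [hf]
  have hcd : a (c + d) ∈ cont g := by
    convert coeff_mem_cont g d
    rw [hg, coeff_sum_range_C_mul_X_pow, if_pos (by omega)]
  have hz : a c ^ d * a (c + 1) * a (c + d) ∈ cont (f * g) * cont f ^ d := by
    rw [heq, pow_succ]
    exact Ideal.mul_mem_mul (Ideal.mul_mem_mul (Ideal.pow_mem_pow hc d) hc1) hcd
  have hle : cont (f * g) * cont f ^ d ≤ gapIdeal hR (2 * c + d * c) (0 + d * 1) :=
    (Ideal.mul_mono (hf ▸ hg ▸ cont_mul_sum_range_C_mul_X_pow_le_gapIdeal hR ha)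
      ((Ideal.pow_right_mono (hf ▸ cont_C_sub_C_mul_X_le_gapIdeal hR ha) d).trans
        (gapIdeal_pow_le hR c 1 d))).trans (gapIdeal_mul_le hR _ _ _ _)
  have hz_coe : ((a c ^ d * a (c + 1) * a (c + d) : R) : PowerSeries F) =
      PowerSeries.X ^ (d * c + (c + 1) + (c + d)) := by
    push_cast
    rw [ha c le_rfl, ha (c + 1) (by omega), ha (c + d) (by omega), ← pow_mul, ← pow_add,
      ← pow_add, mul_comm c d]
  have hN := (mem_gapIdeal hR).1 (hle hz) (d * c + (c + 1) + (c + d)) fun h => by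
    obtain ⟨-, h⟩ := h; omega
  rw [hz_coe, PowerSeries.coeff_X_pow_self] at hN
  exact one_ne_zero hN

lemma mug_cont_sum_range_C_mul_X_pow (hR : ∀ r ∈ R, SupportedIn (gapSet e 0 0) r)
    (ha : ∀ k, c ≤ k → (a k : PowerSeries F) = PowerSeries.X ^ k) :
    mug (cont (∑ i ∈ Finset.range e, C (a (c + i)) * X ^ i)) = e := by
  let φ : R →+ (Fin e → F) :=
    (LinearMap.pi fun i : Fin e => PowerSeries.coeff (c + i)).toAddMonoidHom.comp
      R.subtype.toAddMonoidHom
  have hφ (y : R) (i : Fin e) : φ y i = PowerSeries.coeff (c + i) (y : PowerSeries F) := rfl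
  have hcont := cont_sum_range_C_mul_X_pow (fun i => a (c + i)) e
  have hgap : cont (∑ i ∈ Finset.range e, C (a (c + i)) * X ^ i) ≤ gapIdeal hR c (e - 1) := by
    rw [hcont, Ideal.span_le]
    rintro _ ⟨i, rfl⟩
    exact (mem_gapIdeal hR).2 (ha (c + i) (by omega) ▸ supportedIn_X_pow ⟨by omega, by omega⟩)
  refine mug_eq_of_finrank_eq (PowerSeries.constantCoeff.comp R.subtype) φ (fun r y hy => ?_) ?_
    (Module.finrank_fin_fun F) _ hcont.symm
  · funext i
    rw [hφ, Pi.smul_apply, hφ, Subring.coe_mul, smul_eq_mul]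
    exact coeff_add_mul_eq_constantCoeff_mul (hR r r.2)
      (((mem_gapIdeal hR).1 (hgap hy)).mono fun _ h => h.1) i.2
  · rw [eq_top_iff, ← (Pi.basisFun F (Fin e)).span_eq, Submodule.span_le]
    rintro _ ⟨i, rfl⟩
    refine Submodule.subset_span ⟨a (c + i), hcont ▸ Ideal.subset_span ⟨i, rfl⟩, funext fun j => ?_⟩
    rw [hφ, ha _ (by omega), PowerSeries.coeff_X_pow, Pi.basisFun_apply, Pi.single_apply]
    simp [Fin.ext_iff]

end Example

/-- General Example 5.4, first part: let `e ≥ 3`, `R = F[[s^e, s^{e+1}]]` (power series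
supported on the numerical semigroup `⟨e, e+1⟩`), with conductor exponent `c = (e-1)e`,
and `g' = s^c + s^{c+1}t + ⋯ + s^{c+e-1}t^{e-1}`.  Then `μ_R(g') = e = μ_R(c(g'))`; in
particular for `f = s^c - s^{c+1}t` the least `k` with `c(fg')c(f)^{k-1} = c(f)^k c(g')`
is `k = e`. -/
theorem general_example_5_4 {F : Type*} [Field F] (e : ℕ) (he : 3 ≤ e)
    (R : Subring (PowerSeries F))
    (hR : ∀ f : PowerSeries F, f ∈ R ↔
      ∀ n : ℕ, (∀ a b : ℕ, n ≠ a * e + b * (e + 1)) → PowerSeries.coeff n f = 0)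
    (a : ℕ → ↥R) (ha : ∀ k, (e - 1) * e ≤ k → (a k : PowerSeries F) = PowerSeries.X ^ k)
    (g' f : Polynomial ↥R)
    (hg' : g' = ∑ i ∈ Finset.range e, Polynomial.C (a ((e - 1) * e + i)) * Polynomial.X ^ i)
    (hf : f = Polynomial.C (a ((e - 1) * e)) - Polynomial.C (a ((e - 1) * e + 1)) * Polynomial.X) :
    dmNumber ↥R g' = e ∧
    mug (cont g') = e ∧
    sInf {k : ℕ | 0 < k ∧ cont (f * g') * cont f ^ (k - 1) = cont f ^ k * cont g'} = e := by
  have hgap : ∀ r ∈ R, SupportedIn (gapSet e 0 0) r :=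
    fun r hr => supportedIn_gapSet_of_numericalSemigroup ((hR r).1 hr)
  have hdeg : g'.natDegree ≤ e - 1 := hg' ▸ natDegree_sum_range_C_mul_X_pow_le _ e
  have hDM (p : R[X]) : cont (p * g') * cont p ^ (e - 1) = cont p ^ e * cont g' := by
    simpa [Nat.sub_add_cancel (by omega : 1 ≤ e)] using dedekind_mertens p g' hdeg
  have hne := cont_mul_mul_cont_pow_ne hgap (by omega) ha hf hg'
  exact ⟨dmNumber_eq (by omega) hDM ⟨f, hne⟩, hg' ▸ mug_cont_sum_range_C_mul_X_pow hgap ha,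
    sInf_cont_mul_mul_cont_pow_pred_eq (by omega) (hDM f) hne⟩
end

section
/- Let F be a field, R = F[[s^3, s^5]] ⊆ F[[s]] = R̄, and I = (s^3, s^5)^3 = (s^9, s^{11}, s^{13})R. Then μ_R(I) = 3 but I ≠ IR̄ ∩ R. -/
open Polynomial
set_option synthInstance.maxHeartbeats 1000000
set_option maxHeartbeats 1000000

/-- Footnote example in Setup 5.3: in `R = F[[s³,s⁵]]` (power series with vanishing
coefficients in degrees `1, 2, 4, 7`), the ideal `I = (s³,s⁵)³ = (s⁹,s¹¹,s¹³)` has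
`μ_R(I) = 3` but is not integrally closed (`I ≠ I·F[[s]] ∩ R`). -/
theorem footnote_example_s3s5 {F : Type*} [Field F] (R : Subring (PowerSeries F))
    (hR : ∀ f : PowerSeries F, f ∈ R ↔
      PowerSeries.coeff (R := F) 1 f = 0 ∧ PowerSeries.coeff (R := F) 2 f = 0 ∧
      PowerSeries.coeff (R := F) 4 f = 0 ∧ PowerSeries.coeff (R := F) 7 f = 0)
    (a : ℕ → ↥R)
    (ha : ∀ k, k ≠ 1 → k ≠ 2 → k ≠ 4 → k ≠ 7 → (a k : PowerSeries F) = PowerSeries.X ^ k)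
    (I : Ideal ↥R) (hI : I = (Ideal.span {a 3, a 5}) ^ 3) :
    I = Ideal.span {a 9, a 11, a 13} ∧
    mug I = 3 ∧
    I ≠ Ideal.comap R.subtype (Ideal.map R.subtype I) := by
  have ha3 := ha 3 (by norm_num) (by norm_num) (by norm_num) (by norm_num)
  have ha5 := ha 5 (by norm_num) (by norm_num) (by norm_num) (by norm_num)
  have ha6 := ha 6 (by norm_num) (by norm_num) (by norm_num) (by norm_num)
  have ha9 := ha 9 (by norm_num) (by norm_num) (by norm_num) (by norm_num)
  have ha10 := ha 10 (by norm_num) (by norm_num) (by norm_num) (by norm_num)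
  have ha11 := ha 11 (by norm_num) (by norm_num) (by norm_num) (by norm_num)
  have ha13 := ha 13 (by norm_num) (by norm_num) (by norm_num) (by norm_num)
  -- Part 1 : I = span {a9, a11, a13}
  have m9 : a 9 ∈ Ideal.span {a 9, a 11, a 13} := Ideal.subset_span (by simp)
  have m11 : a 11 ∈ Ideal.span {a 9, a 11, a 13} := Ideal.subset_span (by simp)
  have m13 : a 13 ∈ Ideal.span {a 9, a 11, a 13} := Ideal.subset_span (by simp)
  have hI3 : I = Ideal.span {a 9, a 11, a 13} := by
    rw [hI]
    apply le_antisymm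
    · rw [pow_succ, pow_succ, pow_one, Ideal.span_mul_span', Ideal.span_mul_span',
        Ideal.span_le]
      rintro z ⟨u, hu, w, hw, rfl⟩
      obtain ⟨p, hp, q, hq, rfl⟩ := hu
      simp only [Set.mem_insert_iff, Set.mem_singleton_iff] at hp hq hw
      rcases hp with rfl | rfl <;> rcases hq with rfl | rfl <;> rcases hw with rfl | rfl
      · exact (show a 3 * a 3 * a 3 = a 9 from Subtype.ext
          (by push_cast [ha3, ha9]; ring)) ▸ m9
      · exact (show a 3 * a 3 * a 5 = a 11 from Subtype.ext
          (by push_cast [ha3, ha5, ha11]; ring)) ▸ m11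
      · exact (show a 3 * a 5 * a 3 = a 11 from Subtype.ext
          (by push_cast [ha3, ha5, ha11]; ring)) ▸ m11
      · exact (show a 3 * a 5 * a 5 = a 13 from Subtype.ext
          (by push_cast [ha3, ha5, ha13]; ring)) ▸ m13
      · exact (show a 5 * a 3 * a 3 = a 11 from Subtype.ext
          (by push_cast [ha3, ha5, ha11]; ring)) ▸ m11
      · exact (show a 5 * a 3 * a 5 = a 13 from Subtype.ext
          (by push_cast [ha3, ha5, ha13]; ring)) ▸ m13
      · exact (show a 5 * a 5 * a 3 = a 13 from Subtype.ext
          (by push_cast [ha3, ha5, ha13]; ring)) ▸ m13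
      · have h : a 5 * a 5 * a 5 = a 6 * a 9 := Subtype.ext (by push_cast [ha5, ha6, ha9]; ring)
        show a 5 * a 5 * a 5 ∈ _
        rw [h]
        exact Ideal.mul_mem_left _ _ m9
    · rw [Ideal.span_le]
      have h3K : a 3 ∈ Ideal.span {a 3, a 5} := Ideal.subset_span (by simp)
      have h5K : a 5 ∈ Ideal.span {a 3, a 5} := Ideal.subset_span (by simp)
      rintro z hz
      simp only [Set.mem_insert_iff, Set.mem_singleton_iff] at hz
      rcases hz with rfl | rfl | rfl
      · rw [show a 9 = a 3 * a 3 * a 3 from Subtype.ext (by push_cast [ha3, ha9]; ring)]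
        rw [pow_succ, pow_succ, pow_one]
        exact Ideal.mul_mem_mul (Ideal.mul_mem_mul h3K h3K) h3K
      · rw [show a 11 = a 3 * a 3 * a 5 from Subtype.ext (by push_cast [ha3, ha5, ha11]; ring)]
        rw [pow_succ, pow_succ, pow_one]
        exact Ideal.mul_mem_mul (Ideal.mul_mem_mul h3K h3K) h5K
      · rw [show a 13 = a 3 * a 5 * a 5 from Subtype.ext (by push_cast [ha3, ha5, ha13]; ring)]
        rw [pow_succ, pow_succ, pow_one]
        exact Ideal.mul_mem_mul (Ideal.mul_mem_mul h3K h5K) h5K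
  -- decomposition of elements of I
  have hdec : ∀ g : ↥R, g ∈ I → ∃ p q t : ↥R, g = p * a 9 + q * a 11 + t * a 13 := by
    intro g hg
    rw [hI3, show ({a 9, a 11, a 13} : Set ↥R) = insert (a 9) {a 11, a 13} from rfl,
      Ideal.mem_span_insert] at hg
    obtain ⟨p, w, hw, rfl⟩ := hg
    obtain ⟨q, t, rfl⟩ := Ideal.mem_span_pair.mp hw
    exact ⟨p, q, t, by ring⟩
  -- coefficient facts for members of R
  have hc : ∀ r : ↥R, PowerSeries.coeff (R := F) 1 (r : PowerSeries F) = 0 ∧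
      PowerSeries.coeff (R := F) 2 (r : PowerSeries F) = 0 ∧
      PowerSeries.coeff (R := F) 4 (r : PowerSeries F) = 0 := by
    intro r
    obtain ⟨h1, h2, h4, _⟩ := (hR (r : PowerSeries F)).mp r.2
    exact ⟨h1, h2, h4⟩
  -- coefficients of a decomposed element
  have hcoe : ∀ p q t : ↥R, ((p * a 9 + q * a 11 + t * a 13 : ↥R) : PowerSeries F) =
      (p : PowerSeries F) * PowerSeries.X ^ 9 + (q : PowerSeries F) * PowerSeries.X ^ 11
      + (t : PowerSeries F) * PowerSeries.X ^ 13 := by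
    intro p q t
    push_cast [ha9, ha11, ha13]
    ring
  have hcoeff : ∀ (n : ℕ) (p q t : ↥R),
      PowerSeries.coeff (R := F) n ((p * a 9 + q * a 11 + t * a 13 : ↥R) : PowerSeries F) =
      (if 9 ≤ n then PowerSeries.coeff (R := F) (n - 9) (p : PowerSeries F) else 0) +
      (if 11 ≤ n then PowerSeries.coeff (R := F) (n - 11) (q : PowerSeries F) else 0) +
      (if 13 ≤ n then PowerSeries.coeff (R := F) (n - 13) (t : PowerSeries F) else 0) := by
    intro n p q t
    rw [hcoe, map_add, map_add, PowerSeries.coeff_mul_X_pow', PowerSeries.coeff_mul_X_pow',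
      PowerSeries.coeff_mul_X_pow']
  -- coeff 10 of any member of I is zero
  have h10 : ∀ g : ↥R, g ∈ I → PowerSeries.coeff (R := F) 10 (g : PowerSeries F) = 0 := by
    intro g hg
    obtain ⟨p, q, t, rfl⟩ := hdec g hg
    rw [hcoeff]
    norm_num [(hc p).1]
  -- Part 3
  have h9I : a 9 ∈ I := hI3 ▸ m9
  have h10c : a 10 ∈ Ideal.comap R.subtype (Ideal.map R.subtype I) := by
    rw [Ideal.mem_comap]
    have hmm : R.subtype (a 9) ∈ Ideal.map R.subtype I := Ideal.mem_map_of_mem _ h9I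
    have hx : R.subtype (a 10) = PowerSeries.X * R.subtype (a 9) := by
      simp only [Subring.coe_subtype, ha9, ha10]; ring
    rw [hx]
    exact Ideal.mul_mem_left _ _ hmm
  have h10n : a 10 ∉ I := by
    intro hmem
    have := h10 _ hmem
    rw [ha10] at this
    simp [PowerSeries.coeff_X_pow] at this
  refine ⟨hI3, ?_, fun h => h10n (by rw [h]; exact h10c)⟩
  -- Part 2 : mug = 3
  classical
  set φ : ↥R → (Fin 3 → F) := fun g => ![PowerSeries.coeff (R := F) 9 (g : PowerSeries F),
    PowerSeries.coeff (R := F) 11 (g : PowerSeries F), PowerSeries.coeff (R := F) 13 (g : PowerSeries F)]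
      with hφ
  have hφdec : ∀ p q t : ↥R, φ (p * a 9 + q * a 11 + t * a 13) =
      ![PowerSeries.coeff (R := F) 0 (p : PowerSeries F), PowerSeries.coeff (R := F) 0 (q : PowerSeries F),
        PowerSeries.coeff (R := F) 0 (t : PowerSeries F)] := by
    intro p q t
    funext i
    fin_cases i
    · show PowerSeries.coeff (R := F) 9 ((p * a 9 + q * a 11 + t * a 13 : ↥R) : PowerSeries F) = _
      rw [hcoeff]
      norm_num
    · show PowerSeries.coeff (R := F) 11 ((p * a 9 + q * a 11 + t * a 13 : ↥R) : PowerSeries F) = _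
      rw [hcoeff]
      norm_num [(hc p).2.1]
    · show PowerSeries.coeff (R := F) 13 ((p * a 9 + q * a 11 + t * a 13 : ↥R) : PowerSeries F) = _
      rw [hcoeff]
      norm_num [(hc p).2.2, (hc q).2.1]
  have hsemi : ∀ (r g : ↥R), g ∈ I →
      φ (r * g) = PowerSeries.coeff (R := F) 0 (r : PowerSeries F) • φ g := by
    intro r g hg
    obtain ⟨p, q, t, rfl⟩ := hdec g hg
    have : r * (p * a 9 + q * a 11 + t * a 13) =
        (r * p) * a 9 + (r * q) * a 11 + (r * t) * a 13 := by ring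
    rw [this, hφdec, hφdec]
    funext i
    fin_cases i <;>
      simp [PowerSeries.coeff_zero_eq_constantCoeff, map_mul]
  have hφadd : ∀ g h : ↥R, φ (g + h) = φ g + φ h := by
    intro g h
    funext i
    fin_cases i <;> simp [hφ]
  have hφzero : φ 0 = 0 := by
    funext i
    fin_cases i <;> simp [hφ]
  -- φ of the generators
  have hgen : ∀ (k : ℕ), (a k ∈ I) → φ (a k) = φ (a k) := fun _ _ => rfl
  have e9 : φ (a 9) = ![1, 0, 0] := by
    have : a 9 = 1 * a 9 + 0 * a 11 + 0 * a 13 := by ring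
    rw [this, hφdec]
    norm_num
  have e11 : φ (a 11) = ![0, 1, 0] := by
    have : a 11 = 0 * a 9 + 1 * a 11 + 0 * a 13 := by ring
    rw [this, hφdec]
    norm_num
  have e13 : φ (a 13) = ![0, 0, 1] := by
    have : a 13 = 0 * a 9 + 0 * a 11 + 1 * a 13 := by ring
    rw [this, hφdec]
    norm_num
  have h11I : a 11 ∈ I := hI3 ▸ m11
  have h13I : a 13 ∈ I := hI3 ▸ m13
  have hlb : ∀ m ∈ {n | ∃ x : Fin n → ↥R, Ideal.span (Set.range x) = I}, 3 ≤ m := by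
    rintro m ⟨x, hx⟩
    have hxI : ∀ i, x i ∈ I := fun i => hx ▸ Ideal.subset_span ⟨i, rfl⟩
    have hspan : ∀ g ∈ I, φ g ∈ Submodule.span F (Set.range (φ ∘ x)) := by
      intro g hg
      rw [← hx] at hg
      obtain ⟨c, rfl⟩ := Ideal.mem_span_range_iff_exists_fun.mp hg
      have hsum : φ (∑ i, c i * x i) =
          ∑ i, PowerSeries.coeff (R := F) 0 ((c i : PowerSeries F)) • φ (x i) := by
        have h1 : φ (∑ i, c i * x i) = ∑ i, φ (c i * x i) :=
          map_sum (⟨⟨φ, hφzero⟩, fun g h => hφadd g h⟩ : ↥R →+ (Fin 3 → F))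
            (fun i => c i * x i) Finset.univ
        rw [h1]
        exact Finset.sum_congr rfl fun i _ => hsemi (c i) (x i) (hxI i)
      rw [hsum]
      exact Submodule.sum_mem _ fun i _ => Submodule.smul_mem _ _
        (Submodule.subset_span ⟨i, rfl⟩)
    have htop : Submodule.span F (Set.range (φ ∘ x)) = ⊤ := by
      rw [eq_top_iff]
      intro w _
      have hw : w = w 0 • ![(1:F), 0, 0] + w 1 • ![0, 1, 0] + w 2 • ![0, 0, 1] := by
        funext i; fin_cases i <;> simp
      rw [hw]
      exact Submodule.add_mem _ (Submodule.add_mem _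
        (Submodule.smul_mem _ _ (e9 ▸ hspan _ h9I))
        (Submodule.smul_mem _ _ (e11 ▸ hspan _ h11I)))
        (Submodule.smul_mem _ _ (e13 ▸ hspan _ h13I))
    have := finrank_le_of_span_eq_top htop
    simpa using this
  have hub : 3 ∈ {n | ∃ x : Fin n → ↥R, Ideal.span (Set.range x) = I} := by
    refine ⟨![a 9, a 11, a 13], ?_⟩
    rw [hI3]
    congr 1
    ext z
    simp [Matrix.range_cons, Matrix.range_empty]
    tauto
  unfold mug
  exact le_antisymm (Nat.sInf_le hub) (le_csInf ⟨3, hub⟩ hlb)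
end
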